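/- Suppose f is a skip rule on pairs witnessing that A ⊕ A is not 0-weakly stochastic, i.e. the sequence of bits selected by f from A ⊕ A has upper density ρ̄ > 0. Define a skip rule g on A that selects position k whenever f selects position 2k or 2k+1 (skipping a repeated k). Then the upper density of the bits g selects from A is at least ρ̄/2. Consequently, if A is 0-weakly stochastic then so is A ⊕ A. -/

import Mathlib

open Filter Topology Classical

/-- `cnt A n = |A ∩ [0,n)|`. -/
noncomputable def cnt (A : Set ℕ) (n : ℕ) : ℕ :=
  ((Finset.range n).filter (· ∈ A)).card

/-- `dens A n = |A ∩ [0,n)| / n`, the density of `A` at `n`. -/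
noncomputable def dens (A : Set ℕ) (n : ℕ) : ℝ := (cnt A n : ℝ) / n

/-- A skip rule: given the finite history of (door, content) pairs observed so far,
it picks the next door, which must exceed the last door visited. -/
structure SkipRule where
  next : List (ℕ × Bool) → ℕ
  incr : ∀ (σ : List (ℕ × Bool)) (p : ℕ × Bool), next (σ ++ [p]) > p.1

/-- The history of the first `n` inspections of `A` by skip rule `R`. -/
noncomputable def SkipRule.hist (R : SkipRule) (A : Set ℕ) : ℕ → List (ℕ × Bool)
  | 0 => []
  | n + 1 =>
      R.hist A n ++ [(R.next (R.hist A n), decide (R.next (R.hist A n) ∈ A))]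

/-- The set of stages at which the bit selected by `R` from `A` is a `1`. -/
noncomputable def SkipRule.selSet (R : SkipRule) (A : Set ℕ) : Set ℕ :=
  {m | R.next (R.hist A m) ∈ A}

/-- `A` is 0-weakly stochastic: every computable skip rule selects from `A`
a sequence of bits with density of `1`s equal to `0`. -/
def WeaklyStochastic0 (A : Set ℕ) : Prop :=
  ∀ R : SkipRule, Computable R.next → Tendsto (dens (R.selSet A)) atTop (𝓝 0)

/-- `A ⊕ A = {2n : n ∈ A} ∪ {2n+1 : n ∈ A}`. -/
def oplus (A : Set ℕ) : Set ℕ :=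
  {m | ∃ n ∈ A, m = 2 * n} ∪ {m | ∃ n ∈ A, m = 2 * n + 1}

/-! `f.halve` runs `f` in its head: when `f` would inspect door `2k` or `2k + 1` of `A ⊕ A`, it
inspects door `k` of `A`, whose bit answers both. Each of its inspections therefore accounts for
one or two consecutive inspections of `f` carrying the same bit, so after `n` steps of `f.halve`
the simulated `f` has made `m` steps with `n ≤ m ≤ 2n` and has selected at most twice as many `1`s.
Consequently the density of `1`s selected by `f` at stage `M` is at most twice the density
selected by `f.halve` at some stage in `[M/2, M]`, which bounds the limsup and, when `A` is
0-weakly stochastic, squeezes `f`'s density to `0`. -/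

theorem Computable.list_foldl {α β σ : Type*} [Primcodable α] [Primcodable β] [Primcodable σ]
    {f : α → List β} {g : α → σ} {h : α → σ × β → σ}
    (hf : Computable f) (hg : Computable g) (hh : Computable₂ h) :
    Computable fun a => (f a).foldl (fun s b => h a (s, b)) (g a) := by
  have hstep : Computable₂ fun (a : α) (p : ℕ × σ) =>
      Option.casesOn (motive := fun _ => σ) (f a)[p.1]? p.2 fun b => h a (p.2, b) :=
    Computable.option_casesOn
      (Computable.list_getElem?.comp (hf.comp .fst) (Computable.fst.comp .snd))
      (Computable.snd.comp .snd) (hh.comp (Computable.fst.comp .fst)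
        ((Computable.snd.comp (Computable.snd.comp .fst)).pair .snd)).to₂
  refine (Computable.nat_rec (Computable.list_length.comp hf) hg hstep).of_eq fun a => ?_
  suffices ∀ n, (Nat.rec (motive := fun _ => σ) (g a) (fun i s =>
      Option.casesOn (motive := fun _ => σ) (f a)[i]? s fun b => h a (s, b)) n) =
      ((f a).take n).foldl (fun s b => h a (s, b)) (g a) by
    rw [this, List.take_length]
  intro n
  induction n with
  | zero => rfl
  | succ n ih =>
    simp only [List.take_add_one, List.foldl_append, ← ih]
    cases (f a)[n]? <;> rfl

lemma cnt_eq_count (S : Set ℕ) : cnt S = Nat.count (· ∈ S) := by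
  ext n
  rw [cnt, Nat.count_eq_card_filter_range]

lemma dens_nonneg (S : Set ℕ) (n : ℕ) : 0 ≤ dens S n := by
  unfold dens; positivity

lemma dens_le_one (S : Set ℕ) (n : ℕ) : dens S n ≤ 1 := by
  rw [dens, cnt_eq_count]
  exact div_le_one_of_le₀ (by exact_mod_cast Nat.count_le _) n.cast_nonneg

lemma mem_oplus {A : Set ℕ} {d : ℕ} : d ∈ oplus A ↔ d / 2 ∈ A := by
  constructor
  · rintro (⟨n, hn, rfl⟩ | ⟨n, hn, rfl⟩) <;> simpa [Nat.mul_add_div] using hn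
  · intro h
    rcases Nat.even_or_odd' d with ⟨k, rfl | rfl⟩
    · exact Or.inl ⟨k, by simpa using h, rfl⟩
    · exact Or.inr ⟨k, by simpa [Nat.mul_add_div] using h, rfl⟩

namespace SkipRule

noncomputable def door (R : SkipRule) (A : Set ℕ) (m : ℕ) : ℕ := R.next (R.hist A m)

lemma strictMono_door (R : SkipRule) (A : Set ℕ) : StrictMono (R.door A) :=
  strictMono_nat_of_lt_succ fun m =>
    R.incr (R.hist A m) (R.door A m, decide (R.door A m ∈ A))

lemma hist_succ (R : SkipRule) (A : Set ℕ) (m : ℕ) :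
    R.hist A (m + 1) = R.hist A m ++ [(R.door A m, decide (R.door A m ∈ A))] := rfl

def nextAbove (σ : List (ℕ × Bool)) : ℕ := σ.getLast?.elim 0 (·.1 + 1)

lemma nextAbove_concat (σ : List (ℕ × Bool)) (p : ℕ × Bool) :
    nextAbove (σ ++ [p]) = p.1 + 1 := by
  simp [nextAbove]

/-- Extends a history `τ` of `f` on `A ⊕ A` by the inspections of `f` that the bit `p = (k, A(k))`
answers: `f`'s next door (`2k` or `2k + 1` on the histories that arise), and the door after it if
that one is `2k + 1`. -/
def replayStep (f : SkipRule) (τ : List (ℕ × Bool)) (p : ℕ × Bool) : List (ℕ × Bool) :=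
  let τ₁ := τ ++ [(f.next τ, p.2)]
  if f.next τ₁ / 2 = p.1 then τ₁ ++ [(f.next τ₁, p.2)] else τ₁

def replay (f : SkipRule) (σ : List (ℕ × Bool)) : List (ℕ × Bool) := σ.foldl (replayStep f) []

lemma replay_concat (f : SkipRule) (σ : List (ℕ × Bool)) (p : ℕ × Bool) :
    replay f (σ ++ [p]) = replayStep f (replay f σ) p := by
  simp [replay]

/-- The rule `g` of the statement. The `max` is inert on the histories that arise from running
it; it is there because `incr` is required of every history. -/
def halve (f : SkipRule) : SkipRule where
  next σ := max (f.next (replay f σ) / 2) (nextAbove σ)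
  incr σ p := by rw [nextAbove_concat]; omega

lemma halve_next_concat (f : SkipRule) (σ : List (ℕ × Bool)) (p : ℕ × Bool) :
    f.halve.next (σ ++ [p]) = max (f.next (f.replay (σ ++ [p])) / 2) (p.1 + 1) := by
  simp only [halve, nextAbove_concat]

lemma computable_replayStep {f : SkipRule} (hf : Computable f.next) :
    Computable₂ (replayStep f) := by
  have hτ₁ : Computable fun x : List (ℕ × Bool) × (ℕ × Bool) => x.1 ++ [(f.next x.1, x.2.2)] :=
    Computable.list_concat.comp .fst ((hf.comp .fst).pair (Computable.snd.comp .snd))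
  have hτ₂ := Computable.list_concat.comp hτ₁ ((hf.comp hτ₁).pair (Computable.snd.comp .snd))
  have hcond := Primrec.eq.decide.to_comp.comp
    ((Primrec.nat_div.comp .id (.const 2)).to_comp.comp (hf.comp hτ₁)) (Computable.fst.comp .snd)
  exact (Computable.cond hcond hτ₂ hτ₁).of_eq fun x => by simp [replayStep, Bool.cond_decide]

lemma computable_halve_next {f : SkipRule} (hf : Computable f.next) : Computable f.halve.next := by
  have hreplay : Computable (replay f) :=
    Computable.list_foldl (h := fun _ p => replayStep f p.1 p.2) .id (.const [])
      ((computable_replayStep hf).comp (Computable.fst.comp .snd) (Computable.snd.comp .snd)).to₂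
  have hnextAbove : Computable nextAbove := by
    have := Computable.option_casesOn (Primrec.list_head?.to_comp.comp Computable.list_reverse)
      (Computable.const 0)
      (Computable.succ.comp (Computable.fst.comp .snd) :
        Computable fun x : _ × (ℕ × Bool) => x.2.1 + 1).to₂
    exact this.of_eq fun σ => by cases h : σ.getLast? <;> simp_all [nextAbove]
  exact Primrec.nat_max.to_comp.comp
    ((Primrec.nat_div.comp .id (.const 2)).to_comp.comp (hf.comp hreplay)) hnextAbove

section Synced

variable (f : SkipRule) (A : Set ℕ)

def Synced (n m : ℕ) : Prop :=
  f.replay (f.halve.hist A n) = f.hist (oplus A) m ∧ f.halve.door A n = f.door (oplus A) m / 2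

lemma replayStep_hist (m : ℕ) :
    f.replayStep (f.hist (oplus A) m)
        (f.door (oplus A) m / 2, decide (f.door (oplus A) m ∈ oplus A)) =
      if f.door (oplus A) (m + 1) / 2 = f.door (oplus A) m / 2 then
        f.hist (oplus A) (m + 2) else f.hist (oplus A) (m + 1) := by
  show (if f.door (oplus A) (m + 1) / 2 = _ then
      f.hist (oplus A) (m + 1) ++
        [(f.door (oplus A) (m + 1), decide (f.door (oplus A) m ∈ oplus A))]
      else f.hist (oplus A) (m + 1)) = _
  split_ifs with hc
  · rw [show m + 2 = m + 1 + 1 from rfl, hist_succ _ _ (m + 1), mem_oplus, mem_oplus, hc]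
  · rfl

variable {f A}

lemma Synced.mem_selSet_iff {n m : ℕ} (h : f.Synced A n m) :
    m ∈ f.selSet (oplus A) ↔ n ∈ f.halve.selSet A := by
  change f.door (oplus A) m ∈ oplus A ↔ f.halve.door A n ∈ A
  rw [mem_oplus, h.2]

lemma Synced.succ {n m : ℕ} (h : f.Synced A n m) :
    f.Synced A (n + 1) (m + 1) ∨
      f.Synced A (n + 1) (m + 2) ∧ (m + 1 ∈ f.selSet (oplus A) ↔ m ∈ f.selSet (oplus A)) := by
  have hmono := f.strictMono_door (oplus A)
  have h₁ := hmono (Nat.lt_add_one m)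
  have h₂ := hmono (show m + 1 < m + 2 by omega)
  have hreplay : f.replay (f.halve.hist A (n + 1)) =
      f.replayStep (f.hist (oplus A) m)
        (f.door (oplus A) m / 2, decide (f.door (oplus A) m ∈ oplus A)) := by
    rw [hist_succ, replay_concat, h.1, h.2, mem_oplus]
  have hdoor : f.halve.door A (n + 1) =
      max (f.next (f.replay (f.halve.hist A (n + 1))) / 2) (f.door (oplus A) m / 2 + 1) := by
    rw [door, hist_succ, halve_next_concat, h.2]
  rw [replayStep_hist] at hreplay
  by_cases hc : f.door (oplus A) (m + 1) / 2 = f.door (oplus A) m / 2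
  · rw [if_pos hc] at hreplay
    refine Or.inr ⟨⟨hreplay, ?_⟩, ?_⟩
    · rw [hdoor, hreplay]
      exact max_eq_left (show f.door (oplus A) m / 2 + 1 ≤ f.door (oplus A) (m + 2) / 2 by omega)
    · change f.door (oplus A) (m + 1) ∈ oplus A ↔ f.door (oplus A) m ∈ oplus A
      rw [mem_oplus, mem_oplus, hc]
  · rw [if_neg hc] at hreplay
    refine Or.inl ⟨hreplay, ?_⟩
    rw [hdoor, hreplay]
    exact max_eq_left (show f.door (oplus A) m / 2 + 1 ≤ f.door (oplus A) (m + 1) / 2 by omega)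

variable (f A)

lemma exists_synced (n : ℕ) : ∃ m, f.Synced A n m ∧ n ≤ m ∧ m ≤ 2 * n ∧
    cnt (f.selSet (oplus A)) m ≤ 2 * cnt (f.halve.selSet A) n := by
  induction n with
  | zero =>
    exact ⟨0, ⟨rfl, by simp [door, halve, nextAbove, hist, replay]⟩, le_rfl, le_rfl,
      by simp [cnt]⟩
  | succ n ih =>
    obtain ⟨m, hsync, hnm, hmn, hcnt⟩ := ih
    simp only [cnt_eq_count] at hcnt ⊢
    have hbit := hsync.mem_selSet_iff
    rcases hsync.succ with hsync' | ⟨hsync', hbit'⟩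
    · refine ⟨m + 1, hsync', by omega, by omega, ?_⟩
      simp only [Nat.count_succ, hbit]
      split_ifs <;> omega
    · refine ⟨m + 2, hsync', by omega, by omega, ?_⟩
      simp only [Nat.count_succ, hbit', hbit]
      split_ifs <;> omega

end Synced

end SkipRule

lemma exists_dens_le_mul_dens_comp {S T : Set ℕ} {c : ℕ}
    (h : ∀ n, ∃ m, n ≤ m ∧ m ≤ c * n ∧ cnt S m ≤ c * cnt T n) :
    ∃ φ : ℕ → ℕ, Tendsto φ atTop atTop ∧ ∀ M, dens S M ≤ c * dens T (φ M) := by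
  choose m hnm hmc hcnt using h
  have hex : ∀ M, ∃ n, M ≤ m n := fun M => ⟨M, hnm M⟩
  set φ := fun M => Nat.find (hex M)
  have hφ : ∀ M, M ≤ m (φ M) := fun M => Nat.find_spec (hex M)
  have hφle : ∀ M, φ M ≤ M := fun M => Nat.find_min' (hex M) (hnm M)
  have hle_mul : ∀ M, M ≤ c * φ M := fun M => (hφ M).trans (hmc _)
  refine ⟨φ, tendsto_atTop_atTop.2 fun b => ⟨c * b + 1, fun M hM => ?_⟩, fun M => ?_⟩
  · exact (Nat.lt_of_mul_lt_mul_left (hM.trans (hle_mul M))).le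
  rcases M.eq_zero_or_pos with rfl | hM
  · simpa [dens] using mul_nonneg c.cast_nonneg (dens_nonneg T (φ 0))
  have hφpos : 0 < φ M := Nat.pos_of_mul_pos_left (hM.trans_le (hle_mul M))
  have hcnt_le : (cnt S M : ℝ) ≤ c * cnt T (φ M) := by
    rw [cnt_eq_count] at hcnt ⊢
    exact_mod_cast (Nat.count_monotone _ (hφ M)).trans (hcnt _)
  calc dens S M ≤ c * cnt T (φ M) / M := div_le_div_of_nonneg_right hcnt_le M.cast_nonneg
    _ ≤ c * cnt T (φ M) / φ M := div_le_div_of_nonneg_left (by positivity)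
        (by exact_mod_cast hφpos) (by exact_mod_cast hφle M)
    _ = c * dens T (φ M) := mul_div_assoc _ _ _

lemma limsup_dens_le_mul_limsup_dens {S T : Set ℕ} {c : ℝ} {φ : ℕ → ℕ} (hc : 0 ≤ c)
    (hφ : Tendsto φ atTop atTop) (h : ∀ M, dens S M ≤ c * dens T (φ M)) :
    limsup (dens S) atTop ≤ c * limsup (dens T) atTop := by
  have hT_le : IsBoundedUnder (· ≤ ·) atTop (dens T) := isBoundedUnder_of ⟨1, dens_le_one T⟩
  calc limsup (dens S) atTop ≤ limsup ((c * ·) ∘ dens T ∘ φ) atTop :=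
        limsup_le_limsup (Eventually.of_forall h) (isCoboundedUnder_le_of_le atTop (dens_nonneg S))
          (isBoundedUnder_of ⟨c, fun M => by
            simpa using mul_le_mul_of_nonneg_left (dens_le_one T (φ M)) hc⟩)
    _ = c * limsup (dens T ∘ φ) atTop :=
        (Monotone.map_limsup_of_continuousAt (monotone_mul_left_of_nonneg hc) _
          (continuous_const_mul c).continuousAt
          (isBoundedUnder_of ⟨1, fun M => dens_le_one T (φ M)⟩)
          (isCoboundedUnder_le_of_le atTop fun M => dens_nonneg T (φ M))).symm
    _ ≤ c * limsup (dens T) atTop := mul_le_mul_of_nonneg_left (hφ.limsup_comp_le_limsup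
          (isCoboundedUnder_le_of_le _ fun M => dens_nonneg T M) hT_le) hc

lemma SkipRule.exists_dens_oplus_le_two_mul_dens_halve (f : SkipRule) (A : Set ℕ) :
    ∃ φ : ℕ → ℕ, Tendsto φ atTop atTop ∧
      ∀ M, dens (f.selSet (oplus A)) M ≤ 2 * dens (f.halve.selSet A) (φ M) := by
  obtain ⟨φ, hφ, hle⟩ := exists_dens_le_mul_dens_comp fun n =>
    (f.exists_synced A n).imp fun _ ⟨_, hnm, hmn, hcnt⟩ => ⟨hnm, hmn, hcnt⟩
  exact ⟨φ, hφ, by exact_mod_cast hle⟩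

theorem stmt10 :
    (∀ (A : Set ℕ) (f : SkipRule), Computable f.next →
        0 < limsup (dens (f.selSet (oplus A))) atTop →
        ∃ g : SkipRule, Computable g.next ∧
          limsup (dens (f.selSet (oplus A))) atTop / 2 ≤
            limsup (dens (g.selSet A)) atTop) ∧
    ∀ A : Set ℕ, WeaklyStochastic0 A → WeaklyStochastic0 (oplus A) := by
  refine ⟨fun A f hf _ => ⟨f.halve, SkipRule.computable_halve_next hf, ?_⟩, fun A hA f hf => ?_⟩
  all_goals obtain ⟨φ, hφ, hle⟩ := f.exists_dens_oplus_le_two_mul_dens_halve A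
  · linarith [limsup_dens_le_mul_limsup_dens zero_le_two hφ hle]
  · have hhalve := ((hA f.halve (SkipRule.computable_halve_next hf)).comp hφ).const_mul 2
    rw [mul_zero] at hhalve
    exact tendsto_of_tendsto_of_tendsto_of_le_of_le tendsto_const_nhds hhalve (dens_nonneg _) hle
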